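/- Let B be a C*-algebra, E a Hilbert B-module, and G a closed ternary ideal of E with B_G the closed linear span of {⟨g,g'⟩ : g, g' ∈ G}. Assume that for every x ∈ E there exists g ∈ G such that x·a = g·a for all a ∈ B_G. Then every x ∈ E decomposes uniquely as x = g + y with g ∈ G and y ∈ G^⊥ = {y ∈ E : ⟨y,g⟩ = 0 for all g ∈ G}; moreover G^⊥ is a closed ternary ideal of E, y·a = 0 for all y ∈ G^⊥ and a ∈ B_G, and ⟨g,g'⟩·⟨y,y'⟩ = 0 for all g, g' ∈ G and y, y' ∈ G^⊥. -/

import Mathlib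

open scoped RightActions

/-- The closed linear span of a subset of a topological `ℂ`-module. -/
noncomputable def clSpan {M : Type*} [AddCommMonoid M] [Module ℂ M] [TopologicalSpace M]
    (S : Set M) : Set M :=
  closure (Submodule.span ℂ S : Set M)

/-- A subset is a (complex) linear subspace. -/
def IsLinearSubspace {M : Type*} [AddCommMonoid M] [Module ℂ M] (K : Set M) : Prop :=
  (0 : M) ∈ K ∧ (∀ x ∈ K, ∀ y ∈ K, x + y ∈ K) ∧ ∀ (c : ℂ), ∀ x ∈ K, c • x ∈ K

/-- A closed two-sided ideal of a C*-algebra `B`. -/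
structure IsClosedTwoSidedIdeal {B : Type*} [NonUnitalCStarAlgebra B] (I : Set B) : Prop where
  isClosed : IsClosed I
  subspace : IsLinearSubspace I
  mul_mem_left : ∀ (b : B), ∀ a ∈ I, b * a ∈ I
  mul_mem_right : ∀ (b : B), ∀ a ∈ I, a * b ∈ I

/-- The Hilbert C⋆-module class as it stood in the older Mathlib: a right `A`-action
through `Aᵐᵒᵖ` and an inner product with `⟪x, y <• a⟫ = ⟪x, y⟫ * a`. -/
class RightCStarModule (A : outParam <| Type*) (E : Type*) [NonUnitalSemiring A] [StarRing A]
    [Module ℂ A] [AddCommGroup E] [Module ℂ E] [PartialOrder A] [SMul Aᵐᵒᵖ E] [Norm A] [Norm E]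
    extends Inner A E where
  inner_add_right {x} {y} {z} : inner x (y + z) = inner x y + inner x z
  inner_self_nonneg {x} : 0 ≤ inner x x
  inner_self {x} : inner x x = 0 ↔ x = 0
  inner_op_smul_right {a : A} {x y : E} : inner x (y <• a) = inner x y * a
  inner_smul_right_complex {z : ℂ} {x} {y} : inner x (z • y) = z • inner x y
  star_inner x y : star (inner x y) = inner y x
  norm_eq_sqrt_norm_inner_self x : ‖x‖ = √‖inner x x‖

section HilbertModule

variable (B : Type*) [NonUnitalCStarAlgebra B] [PartialOrder B] [StarOrderedRing B]
variable {E : Type*} [NormedAddCommGroup E] [NormedSpace ℂ E] [SMul Bᵐᵒᵖ E] [RightCStarModule B E]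

/-- `K ⊆ E` is an *ideal submodule* if it is the closed linear span of
`{x <• i : x ∈ E, i ∈ I}` for some closed two-sided ideal `I` of `B`. -/
def IsIdealSubmodule (K : Set E) : Prop :=
  ∃ I : Set B, IsClosedTwoSidedIdeal I ∧
    K = clSpan {z : E | ∃ x : E, ∃ i ∈ I, z = x <• i}

/-- A *ternary ideal* of a Hilbert `B`-module `E`: a linear subspace `K` with
`x <• ⟪k, y⟫ ∈ K` for all `x y ∈ E` and `k ∈ K`. -/
def IsTernaryIdeal (K : Set E) : Prop :=
  IsLinearSubspace K ∧ ∀ (x y : E), ∀ k ∈ K, x <• (inner B k y : B) ∈ K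

/-- `B_S`: the closed linear span in `B` of all inner products of elements of `S`. -/
noncomputable def rangeIdeal (S : Set E) : Set B :=
  clSpan {b : B | ∃ k ∈ S, ∃ k' ∈ S, b = (inner B k k' : B)}

/-- The orthogonal complement of a subset of a Hilbert `B`-module. -/
def perp (S : Set E) : Set E :=
  {x : E | ∀ s ∈ S, (inner B x s : B) = 0}

end HilbertModule

/-! The orthogonal complement of a ternary ideal `G` is exactly the annihilator of `B_G`:
if `y` kills `B_G`, `k ∈ G` and `b = ⟪k, y⟫`, then `a = ⟪k <• b, k <• b⟫ = b⋆⟪k, k⟫b ∈ B_G`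
satisfies `b a = 0`, so `a² = 0`, whence `k <• b = 0` and `b⋆b = ⟪y, k <• b⟫ = 0` by the
C⋆-identity. The annihilator is closed, and the hypothesis says precisely that `x - g` kills
`B_G`, giving the decomposition `x = g + (x - g)`. Once every `x` splits as `g + y`, the identity
`⟪x <• ⟪w, z⟫, k⟫ = ⟪z, w <• ⟪g, k⟫⟫` shows that `G^⊥` is a ternary ideal. -/

theorem clSpan_subset {M : Type*} [AddCommMonoid M] [Module ℂ M] [TopologicalSpace M]
    {S : Set M} {K : Submodule ℂ M} (hK : IsClosed (K : Set M)) (hS : S ⊆ K) :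
    clSpan S ⊆ K :=
  closure_minimal (Submodule.span_le.mpr hS) hK

theorem IsSelfAdjoint.eq_zero_of_mul_self_eq_zero {A : Type*} [NonUnitalNormedRing A] [StarRing A]
    [CStarRing A] {a : A} (ha : IsSelfAdjoint a) (h : a * a = 0) : a = 0 :=
  (CStarRing.star_mul_self_eq_zero_iff a).mp (by rwa [ha.star_eq])

namespace RightCStarModule

variable {B : Type*} [NonUnitalCStarAlgebra B] [PartialOrder B]
variable {E : Type*} [NormedAddCommGroup E] [NormedSpace ℂ E] [SMul Bᵐᵒᵖ E] [RightCStarModule B E]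

theorem inner_sub_right (x y z : E) : inner B x (y - z) = inner B x y - inner B x z := by
  rw [eq_sub_iff_add_eq, ← inner_add_right, sub_add_cancel]

theorem inner_zero_right (x : E) : inner B x (0 : E) = 0 := by
  simpa using inner_sub_right (B := B) x 0 0

theorem inner_add_left (x y z : E) : inner B (x + y) z = inner B x z + inner B y z := by
  rw [← star_inner z, inner_add_right, star_add, star_inner, star_inner]

theorem inner_sub_left (x y z : E) : inner B (x - y) z = inner B x z - inner B y z := by
  rw [← star_inner z, inner_sub_right, star_sub, star_inner, star_inner]

theorem inner_zero_left (x : E) : inner B (0 : E) x = 0 := by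
  rw [← star_inner x, inner_zero_right, star_zero]

theorem inner_op_smul_left (a : B) (x y : E) : inner B (x <• a) y = star a * inner B x y := by
  rw [← star_inner y, inner_op_smul_right, star_mul, star_inner]

theorem inner_smul_left_complex (z : ℂ) (x y : E) :
    inner B (z • x) y = star z • inner B x y := by
  rw [← star_inner y, inner_smul_right_complex, star_smul, star_inner]

theorem ext_inner_left {v w : E} (h : ∀ u : E, inner B u v = inner B u w) : v = w := by
  rw [← sub_eq_zero, ← inner_self (A := B), inner_sub_right, h, sub_self]

theorem add_op_smul (x y : E) (a : B) : (x + y) <• a = x <• a + y <• a :=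
  ext_inner_left (B := B) fun u => by simp only [inner_op_smul_right, inner_add_right, add_mul]

theorem op_smul_add (x : E) (a b : B) : x <• (a + b) = x <• a + x <• b :=
  ext_inner_left (B := B) fun u => by simp only [inner_op_smul_right, inner_add_right, mul_add]

theorem sub_op_smul (x y : E) (a : B) : (x - y) <• a = x <• a - y <• a :=
  ext_inner_left (B := B) fun u => by simp only [inner_op_smul_right, inner_sub_right, sub_mul]

theorem op_smul_smul_complex (x : E) (z : ℂ) (a : B) : x <• (z • a) = z • (x <• a) :=
  ext_inner_left (B := B) fun u => by
    simp only [inner_op_smul_right, inner_smul_right_complex, mul_smul_comm]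

theorem norm_sq_eq_norm_inner_self (x : E) : ‖x‖ ^ 2 = ‖inner B x x‖ := by
  rw [norm_eq_sqrt_norm_inner_self x, Real.sq_sqrt (norm_nonneg _)]

theorem norm_op_smul_le (x : E) (a : B) : ‖x <• a‖ ≤ ‖x‖ * ‖a‖ := by
  refine (sq_le_sq₀ (norm_nonneg _) (by positivity)).mp ?_
  calc ‖x <• a‖ ^ 2 = ‖star a * (inner B x x * a)‖ := by
        rw [norm_sq_eq_norm_inner_self (B := B), inner_op_smul_left, inner_op_smul_right]
    _ ≤ ‖star a‖ * (‖inner B x x‖ * ‖a‖) := norm_mul_le_of_le le_rfl (norm_mul_le _ _)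
    _ = (‖x‖ * ‖a‖) ^ 2 := by rw [norm_star, ← norm_sq_eq_norm_inner_self]; ring

theorem continuous_op_smul_right (a : B) : Continuous fun x : E => x <• a :=
  AddMonoidHomClass.continuous_of_bound (AddMonoidHom.mk' (· <• a) fun x y => add_op_smul x y a)
    ‖a‖ fun x => (norm_op_smul_le x a).trans_eq (mul_comm _ _)

variable (B) in
noncomputable def opSmulLeft (x : E) : B →L[ℂ] E :=
  LinearMap.mkContinuous
    { toFun := (x <• ·)
      map_add' := op_smul_add x
      map_smul' := op_smul_smul_complex x }
    ‖x‖ (norm_op_smul_le x)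

theorem inner_mem_rangeIdeal {G : Set E} {k k' : E} (hk : k ∈ G) (hk' : k' ∈ G) :
    inner B k k' ∈ rangeIdeal B G :=
  subset_closure (Submodule.subset_span ⟨k, hk, k', hk', rfl⟩)

theorem isLinearSubspace_perp (S : Set E) : IsLinearSubspace (perp B S) := by
  refine ⟨fun s _ => inner_zero_left s, fun x hx y hy s hs => ?_, fun c x hx s hs => ?_⟩
  · rw [inner_add_left, hx s hs, hy s hs, add_zero]
  · rw [inner_smul_left_complex, hx s hs, smul_zero]

theorem eq_zero_of_mem_of_mem_perp {S : Set E} {x : E} (hx : x ∈ S) (hx' : x ∈ perp B S) :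
    x = 0 :=
  inner_self.mp (hx' x hx)

theorem op_smul_eq_zero_of_mem_perp {G : Set E} (hG : IsTernaryIdeal B G) {y : E}
    (hy : y ∈ perp B G) {a : B} (ha : a ∈ rangeIdeal B G) : y <• a = 0 := by
  refine clSpan_subset (K := (opSmulLeft B y : B →ₗ[ℂ] E).ker) (opSmulLeft B y).isClosed_ker ?_ ha
  rintro _ ⟨k, hk, k', hk', rfl⟩
  change y <• inner B k k' = 0
  -- `y <• ⟪k, k'⟫` lies in `G`, so it is orthogonal to `y` and hence to itself.
  refine inner_self.mp ?_
  rw [inner_op_smul_left, hy _ (hG.2 y k' k hk), mul_zero]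

theorem mem_perp_of_op_smul_eq_zero {G : Set E} (hG : IsTernaryIdeal B G) {y : E}
    (hy : ∀ a ∈ rangeIdeal B G, y <• a = 0) : y ∈ perp B G := by
  intro k hk
  set b := inner B k y
  have hkb : k <• b ∈ G := hG.2 k y k hk
  set a := inner B (k <• b) (k <• b)
  have hba : b * a = 0 := by
    rw [← inner_op_smul_right, hy a (inner_mem_rangeIdeal hkb hkb), inner_zero_right]
  have ha : a = 0 := by
    refine IsSelfAdjoint.eq_zero_of_mul_self_eq_zero (star_inner (A := B) _ _) ?_
    calc a * a = star b * inner B k k * (b * a) := by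
          simp only [a, inner_op_smul_left, inner_op_smul_right, mul_assoc]
      _ = 0 := by rw [hba, mul_zero]
  have hbb : star b * b = 0 := by
    rw [star_inner, ← inner_op_smul_right, inner_self.mp ha, inner_zero_right]
  show inner B y k = 0
  rw [← star_inner, star_eq_zero]
  exact (CStarRing.star_mul_self_eq_zero_iff b).mp hbb

theorem mem_perp_iff {G : Set E} (hG : IsTernaryIdeal B G) {y : E} :
    y ∈ perp B G ↔ ∀ a ∈ rangeIdeal B G, y <• a = 0 :=
  ⟨fun hy _ => op_smul_eq_zero_of_mem_perp hG hy, mem_perp_of_op_smul_eq_zero hG⟩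

theorem isClosed_perp {G : Set E} (hG : IsTernaryIdeal B G) : IsClosed (perp B G) := by
  have : perp B G = ⋂ a ∈ rangeIdeal B G, (· <• a) ⁻¹' {0} := by
    ext y
    simp only [mem_perp_iff hG, Set.mem_iInter, Set.mem_preimage, Set.mem_singleton_iff]
  rw [this]
  exact isClosed_biInter fun a _ => isClosed_singleton.preimage (continuous_op_smul_right a)

theorem add_eq_add_iff_of_mem_perp {G : Set E} (hG : IsLinearSubspace G) {g g' y y' : E}
    (hg : g ∈ G) (hg' : g' ∈ G) (hy : y ∈ perp B G) (hy' : y' ∈ perp B G) :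
    g + y = g' + y' ↔ g = g' ∧ y = y' := by
  refine ⟨fun h => ?_, fun ⟨rfl, rfl⟩ => rfl⟩
  have hd : g - g' = y' - y := by rw [sub_eq_sub_iff_add_eq_add, h, add_comm]
  have hdG : g - g' ∈ G := by
    simpa [sub_eq_add_neg] using hG.2.1 g hg _ (hG.2.2 (-1) g' hg')
  have hdP : g - g' ∈ perp B G := by
    intro s hs
    rw [hd, inner_sub_left, hy' s hs, hy s hs, sub_self]
  have hd0 := eq_zero_of_mem_of_mem_perp hdG hdP
  exact ⟨sub_eq_zero.mp hd0, (sub_eq_zero.mp (hd ▸ hd0)).symm⟩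

theorem exists_eq_add_mem_perp {G : Set E} (hG : IsTernaryIdeal B G)
    (h : ∀ x : E, ∃ g ∈ G, ∀ a ∈ rangeIdeal B G, x <• a = g <• a) (x : E) :
    ∃ g ∈ G, ∃ y ∈ perp B G, x = g + y := by
  obtain ⟨g, hg, hxg⟩ := h x
  refine ⟨g, hg, x - g, mem_perp_of_op_smul_eq_zero hG fun a ha => ?_, by abel⟩
  rw [sub_op_smul, hxg a ha, sub_self]

theorem isTernaryIdeal_perp {G : Set E} (hG : IsTernaryIdeal B G)
    (hdec : ∀ x : E, ∃ g ∈ G, ∃ y ∈ perp B G, x = g + y) : IsTernaryIdeal B (perp B G) := by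
  refine ⟨isLinearSubspace_perp G, fun x z w hw k hk => ?_⟩
  obtain ⟨g, hg, y, hy, rfl⟩ := hdec x
  calc inner B ((g + y) <• inner B w z) k = inner B z (w <• inner B g k) := by
        rw [inner_op_smul_left, star_inner, inner_add_left, hy k hk, add_zero,
          inner_op_smul_right]
    _ = 0 := by
        rw [op_smul_eq_zero_of_mem_perp hG hw (inner_mem_rangeIdeal hg hk), inner_zero_right]

theorem inner_mul_inner_eq_zero {G : Set E} (hperp : IsTernaryIdeal B (perp B G))
    {g g' y y' : E} (hg : g ∈ G) (hy : y ∈ perp B G) : inner B g g' * inner B y y' = 0 := by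
  rw [← inner_op_smul_right, ← star_inner, hperp.2 g' y' y hy g hg, star_zero]

end RightCStarModule

open RightCStarModule

theorem decomposition_of_trivial_busby_general
    {B : Type*} [NonUnitalCStarAlgebra B] [PartialOrder B]
    {E : Type*} [NormedAddCommGroup E] [NormedSpace ℂ E] [SMul Bᵐᵒᵖ E]
    [RightCStarModule B E] (G : Set E) (hG : IsTernaryIdeal B G)
    (h : ∀ x : E, ∃ g ∈ G, ∀ a ∈ rangeIdeal B G, x <• a = g <• a) :
    (∀ x : E, ∃ g ∈ G, ∃ y ∈ perp B G, x = g + y) ∧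
    (∀ g ∈ G, ∀ g' ∈ G, ∀ y ∈ perp B G, ∀ y' ∈ perp B G,
      g + y = g' + y' → g = g' ∧ y = y') ∧
    IsClosed (perp B G) ∧ IsTernaryIdeal B (perp B G) ∧
    (∀ y ∈ perp B G, ∀ a ∈ rangeIdeal B G, y <• a = 0) ∧
    (∀ g ∈ G, ∀ g' ∈ G, ∀ y ∈ perp B G, ∀ y' ∈ perp B G,
      (inner B g g' : B) * (inner B y y' : B) = 0) := by
  have hdec := exists_eq_add_mem_perp hG h
  have hperp := isTernaryIdeal_perp hG hdec
  exact ⟨hdec, fun g hg g' hg' y hy y' hy' => (add_eq_add_iff_of_mem_perp hG.1 hg hg' hy hy').mp,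
    isClosed_perp hG, hperp, fun y hy _ => op_smul_eq_zero_of_mem_perp hG hy,
    fun g hg _ _ y hy _ _ => inner_mul_inner_eq_zero hperp hg hy⟩

/-- if the canonical map of `E` into the multiplier space of a closed ternary
ideal `G` takes values in `G` (every `x` acts on `B_G` like some `g ∈ G`), then
`E = G ⊕ G^⊥`, `G^⊥` is a closed ternary ideal, `G^⊥ <• B_G = 0`, and
`⟨G,G⟩·⟨G^⊥,G^⊥⟩ = 0`. -/
theorem decomposition_of_trivial_busby
    {B : Type*} [NonUnitalCStarAlgebra B] [PartialOrder B] [StarOrderedRing B]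
    {E : Type*} [NormedAddCommGroup E] [NormedSpace ℂ E] [SMul Bᵐᵒᵖ E]
    [RightCStarModule B E] [CompleteSpace E] (G : Set E) (hGc : IsClosed G) (hG : IsTernaryIdeal B G)
    (h : ∀ x : E, ∃ g ∈ G, ∀ a ∈ rangeIdeal B G, x <• a = g <• a) :
    (∀ x : E, ∃ g ∈ G, ∃ y ∈ perp B G, x = g + y) ∧
    (∀ g ∈ G, ∀ g' ∈ G, ∀ y ∈ perp B G, ∀ y' ∈ perp B G,
      g + y = g' + y' → g = g' ∧ y = y') ∧
    IsClosed (perp B G) ∧ IsTernaryIdeal B (perp B G) ∧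
    (∀ y ∈ perp B G, ∀ a ∈ rangeIdeal B G, y <• a = 0) ∧
    (∀ g ∈ G, ∀ g' ∈ G, ∀ y ∈ perp B G, ∀ y' ∈ perp B G,
      (inner B g g' : B) * (inner B y y' : B) = 0) :=
  decomposition_of_trivial_busby_general G hG h
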